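/- Let m be a positive integer, σ > 0, and let p, q be probability distributions on {0,1}^m. Then MMD²(p,q) with Gaussian kernel K_σ equals zero if and only if p = q. -/
import Mathlib


/-- The Gaussian kernel `K_σ(x,y) = exp(-‖x-y‖²/(2σ²))` on binary vectors `{0,1}^m`,
regarded as vectors in `ℝ^m`. -/
noncomputable def gaussKernel {m : ℕ} (σ : ℝ) (x y : Fin m → Fin 2) : ℝ :=
  Real.exp (-(∑ i, (((x i : ℕ) : ℝ) - ((y i : ℕ) : ℝ)) ^ 2) / (2 * σ ^ 2))

/-- The squared maximum mean discrepancy between distributions `p, q` on a finite set,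
with respect to a kernel `K`. -/
noncomputable def mmdSq {X : Type*} [Fintype X] (K : X → X → ℝ) (p q : X → ℝ) : ℝ :=
  ∑ x, ∑ y, p x * p y * K x y - 2 * ∑ x, ∑ y, p x * q y * K x y
    + ∑ x, ∑ y, q x * q y * K x y

/-- The character `a ↦ (-1)^a` on `Fin 2`. -/
noncomputable def chi (a : Fin 2) : ℝ := if a = 0 then 1 else -1

lemma chi_sq (a : Fin 2) : chi a * chi a = 1 := by
  fin_cases a <;> simp [chi]

lemma kernel_factor (σ : ℝ) (a b : Fin 2) :
    Real.exp (-(((a:ℕ):ℝ) - ((b:ℕ):ℝ))^2 / (2 * σ^2)) =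
      (1 + Real.exp (-1 / (2*σ^2)))/2 + (1 - Real.exp (-1/(2*σ^2)))/2 * (chi a * chi b) := by
  fin_cases a <;> fin_cases b <;> simp [chi] <;> ring_nf

lemma gauss_expand {m : ℕ} (σ : ℝ) (x y : Fin m → Fin 2) :
    gaussKernel σ x y = ∑ T : Finset (Fin m),
      ((1 - Real.exp (-1/(2*σ^2)))/2)^T.card * ((1 + Real.exp (-1/(2*σ^2)))/2)^(m - T.card) *
        ((∏ i ∈ T, chi (x i)) * ∏ i ∈ T, chi (y i)) := by
  have h1 : gaussKernel σ x y = ∏ i, Real.exp (-((((x i:ℕ):ℝ) - ((y i:ℕ):ℝ))^2) / (2 * σ^2)) := by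
    rw [gaussKernel, ← Real.exp_sum]
    congr 1
    rw [neg_div, Finset.sum_div, ← Finset.sum_neg_distrib]
    simp [neg_div]
  rw [h1]
  simp only [kernel_factor σ]
  have h2 : ∀ i : Fin m, (1 + Real.exp (-1 / (2*σ^2)))/2 + (1 - Real.exp (-1/(2*σ^2)))/2 * (chi (x i) * chi (y i))
      = (1 - Real.exp (-1/(2*σ^2)))/2 * (chi (x i) * chi (y i)) + (1 + Real.exp (-1 / (2*σ^2)))/2 := by
    intro i; ring
  rw [Finset.prod_congr rfl (fun i _ => h2 i), Finset.prod_add]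
  rw [Finset.powerset_univ]
  refine Finset.sum_congr rfl (fun T _ => ?_)
  rw [Finset.prod_mul_distrib, Finset.prod_mul_distrib, Finset.prod_const, Finset.prod_const,
    ← Finset.compl_eq_univ_sdiff, Finset.card_compl, Fintype.card_fin]
  ring

lemma quad_form {m : ℕ} (σ : ℝ) (f : (Fin m → Fin 2) → ℝ) :
    ∑ x, ∑ y, f x * f y * gaussKernel σ x y
      = ∑ T : Finset (Fin m),
          ((1 - Real.exp (-1/(2*σ^2)))/2)^T.card * ((1 + Real.exp (-1/(2*σ^2)))/2)^(m - T.card) *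
            (∑ x, f x * ∏ i ∈ T, chi (x i))^2 := by
  simp only [gauss_expand σ, Finset.mul_sum]
  rw [Finset.sum_congr rfl (fun x _ => Finset.sum_comm), Finset.sum_comm]
  refine Finset.sum_congr rfl fun T _ => ?_
  simp only [sq, Finset.sum_mul, Finset.mul_sum]
  refine Finset.sum_congr rfl fun a _ => Finset.sum_congr rfl fun b _ => ?_
  ring

lemma orthogonality {m : ℕ} (x y : Fin m → Fin 2) :
    ∑ T : Finset (Fin m), (∏ i ∈ T, chi (x i)) * ∏ i ∈ T, chi (y i)
      = if x = y then (2:ℝ)^m else 0 := by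
  have h : ∀ T : Finset (Fin m), (∏ i ∈ T, chi (x i)) * ∏ i ∈ T, chi (y i)
      = ∏ i ∈ T, (chi (x i) * chi (y i)) := fun T => (Finset.prod_mul_distrib).symm
  simp only [h]
  have := Finset.prod_add (fun i : Fin m => chi (x i) * chi (y i)) (fun _ => (1:ℝ)) Finset.univ
  simp only [Finset.prod_const_one, mul_one, Finset.powerset_univ] at this
  rw [← this]
  by_cases hxy : x = y
  · subst hxy
    simp only [if_pos rfl, chi_sq]
    norm_num
  · rw [if_neg hxy]
    obtain ⟨i, hi⟩ : ∃ i, x i ≠ y i := by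
      by_contra hc; push_neg at hc; exact hxy (funext hc)
    refine Finset.prod_eq_zero (Finset.mem_univ i) ?_
    have h2 : chi (x i) * chi (y i) = -1 := by
      revert hi
      generalize x i = a; generalize y i = b
      fin_cases a <;> fin_cases b <;> simp [chi]
    rw [h2]; norm_num

lemma inversion {m : ℕ} (f : (Fin m → Fin 2) → ℝ)
    (h : ∀ T : Finset (Fin m), ∑ x, f x * ∏ i ∈ T, chi (x i) = 0) (y : Fin m → Fin 2) :
    f y = 0 := by
  have h2 : ∑ x, f x * ∑ T : Finset (Fin m), (∏ i ∈ T, chi (x i)) * ∏ i ∈ T, chi (y i) = 0 := by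
    have h1 : ∑ T : Finset (Fin m), (∑ x, f x * ∏ i ∈ T, chi (x i)) * ∏ i ∈ T, chi (y i) = 0 := by
      simp [h]
    rw [← h1]
    simp only [Finset.sum_mul, Finset.mul_sum]
    rw [Finset.sum_comm]
    exact Finset.sum_congr rfl fun a _ => Finset.sum_congr rfl fun b _ => by ring
  simp only [orthogonality, mul_ite, mul_zero, Finset.sum_ite_eq', Finset.mem_univ,
    if_true] at h2
  have : (0:ℝ) < 2 ^ m := by positivity
  nlinarith [h2]

lemma gauss_symm {m : ℕ} (σ : ℝ) (x y : Fin m → Fin 2) :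
    gaussKernel σ x y = gaussKernel σ y x := by
  unfold gaussKernel
  congr 2
  exact neg_inj.mpr (Finset.sum_congr rfl fun i _ => by ring)

lemma mmd_eq {m : ℕ} (σ : ℝ) (p q : (Fin m → Fin 2) → ℝ) :
    mmdSq (gaussKernel σ) p q
      = ∑ x, ∑ y, (p x - q x) * (p y - q y) * gaussKernel σ x y := by
  have key : ∀ x y : Fin m → Fin 2, (p x - q x) * (p y - q y) * gaussKernel σ x y
      = p x * p y * gaussKernel σ x y - p x * q y * gaussKernel σ x y
        - q x * p y * gaussKernel σ x y + q x * q y * gaussKernel σ x y := fun x y => by ring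
  simp only [key, Finset.sum_add_distrib, Finset.sum_sub_distrib]
  have hswap : ∑ x, ∑ y, q x * p y * gaussKernel σ x y
      = ∑ x, ∑ y, p x * q y * gaussKernel σ x y := by
    rw [Finset.sum_comm]
    exact Finset.sum_congr rfl fun a _ => Finset.sum_congr rfl fun b _ => by
      rw [gauss_symm]; ring
  rw [hswap, mmdSq]; ring

/-- For `m` a positive integer, `σ > 0`, and `p, q` probability distributions on `{0,1}^m`,
the squared MMD with Gaussian kernel `K_σ` is zero if and only if `p = q`. -/
theorem mmdSq_eq_zero_iff (m : ℕ) (hm : 0 < m) (σ : ℝ) (hσ : 0 < σ)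
    (p q : (Fin m → Fin 2) → ℝ)
    (hp0 : ∀ x, 0 ≤ p x) (hp1 : ∑ x, p x = 1)
    (hq0 : ∀ x, 0 ≤ q x) (hq1 : ∑ x, q x = 1) :
    mmdSq (gaussKernel σ) p q = 0 ↔ p = q := by
  constructor
  · intro h
    set f : (Fin m → Fin 2) → ℝ := fun x => p x - q x with hf
    have hqf : ∑ T : Finset (Fin m),
        ((1 - Real.exp (-1/(2*σ^2)))/2)^T.card * ((1 + Real.exp (-1/(2*σ^2)))/2)^(m - T.card) *
          (∑ x, f x * ∏ i ∈ T, chi (x i))^2 = 0 := by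
      rw [← quad_form, ← mmd_eq, h]
    have hc1 : Real.exp (-1/(2*σ^2)) < 1 := by
      rw [Real.exp_lt_one_iff]
      have : (0:ℝ) < 2*σ^2 := by positivity
      exact div_neg_of_neg_of_pos (by norm_num) this
    have hc0 : 0 < Real.exp (-1/(2*σ^2)) := Real.exp_pos _
    have hw : ∀ T : Finset (Fin m),
        0 < ((1 - Real.exp (-1/(2*σ^2)))/2)^T.card * ((1 + Real.exp (-1/(2*σ^2)))/2)^(m - T.card) := by
      intro T
      have h1 : (0:ℝ) < (1 - Real.exp (-1/(2*σ^2)))/2 := by linarith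
      have h2 : (0:ℝ) < (1 + Real.exp (-1/(2*σ^2)))/2 := by linarith
      positivity
    have hzero : ∀ T : Finset (Fin m), ∑ x, f x * ∏ i ∈ T, chi (x i) = 0 := by
      intro T
      have hnn : ∀ T ∈ (Finset.univ : Finset (Finset (Fin m))),
          0 ≤ ((1 - Real.exp (-1/(2*σ^2)))/2)^T.card * ((1 + Real.exp (-1/(2*σ^2)))/2)^(m - T.card) *
            (∑ x, f x * ∏ i ∈ T, chi (x i))^2 := fun T _ =>
        mul_nonneg (hw T).le (sq_nonneg _)
      have := (Finset.sum_eq_zero_iff_of_nonneg hnn).mp hqf T (Finset.mem_univ T)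
      have hsq : (∑ x, f x * ∏ i ∈ T, chi (x i))^2 = 0 := by
        rcases mul_eq_zero.mp this with h' | h'
        · exact absurd h' (hw T).ne'
        · exact h'
      exact pow_eq_zero_iff (by norm_num) |>.mp hsq
    funext x
    have := inversion f hzero x
    simpa [hf, sub_eq_zero] using this
  · intro h
    subst h
    rw [mmdSq]; ring
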